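/- arXiv:1109.2821 — 5 statements merged into one kernel-verified Lean document; each statement's English description precedes it below -/
import Mathlib

section
/- Let G be a countable group, H a family of subgroups, and suppose there is a G-invariant mean m on ℓ∞(G/H) where G/H is the disjoint union of the coset spaces G/H for H ∈ H. If every H ∈ H is amenable, then G is amenable. -/
open scoped ENNReal

instance sigmaMulAction {G ι : Type*} [Group G] (H : ι → Subgroup G) :
    MulAction G (Σ i, G ⧸ H i) where
  smul g x := ⟨x.1, g • x.2⟩
  one_smul x := by cases x; exact congrArg (Sigma.mk _) (one_smul _ _)
  mul_smul g h x := by cases x; exact congrArg (Sigma.mk _) (mul_smul _ _ _)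

/-- A `G`-invariant mean on ℓ∞(α). -/
def InvariantMeanLinf (G : Type*) [Group G] (α : Type*) [MulAction G α] : Prop :=
  ∃ m : (lp (fun _ : α => ℝ) ∞) →L[ℝ] ℝ,
    ‖m‖ = 1 ∧
    (∀ f : lp (fun _ : α => ℝ) ∞, (∀ x, 0 ≤ f x) → 0 ≤ m f) ∧
    m 1 = 1 ∧
    ∀ (g : G) (f f' : lp (fun _ : α => ℝ) ∞),
      (∀ x, f' x = f (g⁻¹ • x)) → m f' = m f

namespace Stmt6Aux

variable {α β : Type*}

lemma memℓp_comp (σ : β → α) (f : lp (fun _ : α => ℝ) ∞) :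
    Memℓp (fun b => f (σ b)) ∞ := by
  apply memℓp_infty
  refine ⟨‖f‖, ?_⟩
  rintro x ⟨b, rfl⟩
  exact lp.norm_apply_le_norm ENNReal.top_ne_zero f (σ b)

/-- Pullback of an ℓ∞ function along a map. -/
def comp (σ : β → α) (f : lp (fun _ : α => ℝ) ∞) : lp (fun _ : β => ℝ) ∞ :=
  ⟨fun b => f (σ b), memℓp_comp σ f⟩

@[simp] lemma comp_apply (σ : β → α) (f : lp (fun _ : α => ℝ) ∞) (b : β) :
    comp σ f b = f (σ b) := rfl

lemma norm_comp_le (σ : β → α) (f : lp (fun _ : α => ℝ) ∞) : ‖comp σ f‖ ≤ ‖f‖ := by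
  apply lp.norm_le_of_forall_le (norm_nonneg f)
  intro b
  exact lp.norm_apply_le_norm ENNReal.top_ne_zero f (σ b)

lemma comp_add (σ : β → α) (f g : lp (fun _ : α => ℝ) ∞) :
    comp σ (f + g) = comp σ f + comp σ g := by
  apply lp.ext
  funext b
  simp [comp, lp.coeFn_add]
  rfl

lemma comp_smul (σ : β → α) (c : ℝ) (f : lp (fun _ : α => ℝ) ∞) :
    comp σ (c • f) = c • comp σ f := by
  apply lp.ext
  funext b
  simp [comp, lp.coeFn_smul]

end Stmt6Aux

open Stmt6Aux in
/-- If there is a G-invariant mean on ℓ∞(G/𝓗) = ℓ∞(⊔ᵢ G/Hᵢ) and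
every subgroup Hᵢ is amenable, then G is amenable. -/
theorem stmt6 {G ι : Type*} [Group G] [Countable G] [Finite ι]
    (H : ι → Subgroup G)
    (hmean : InvariantMeanLinf G (Σ i, G ⧸ H i))
    (hamen : ∀ i, InvariantMeanLinf (H i) (H i)) :
    InvariantMeanLinf G G := by
  obtain ⟨n, hn1, hnpos, hnone, hninv⟩ := hmean
  choose m hm1 hmpos hmone hminv using hamen
  classical
  -- the "averaging over cosets" map
  set Φ : lp (fun _ : G => ℝ) ∞ → (Σ i, G ⧸ H i) → ℝ :=
    fun f x => m x.1 (comp (fun h : H x.1 => (x.2.out * (h : G) : G)) f) with hΦ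
  have hΦbdd : ∀ (f : lp (fun _ : G => ℝ) ∞) x, ‖Φ f x‖ ≤ ‖f‖ := by
    intro f x
    calc ‖Φ f x‖ ≤ ‖m x.1‖ * ‖comp (fun h : H x.1 => (x.2.out * (h : G) : G)) f‖ :=
          (m x.1).le_opNorm _
      _ ≤ ‖f‖ := by
          rw [hm1, one_mul]
          exact norm_comp_le _ f
  have hΦmem : ∀ f, Memℓp (Φ f) ∞ := by
    intro f
    apply memℓp_infty
    refine ⟨‖f‖, ?_⟩
    rintro x ⟨y, rfl⟩
    exact hΦbdd f y
  set Ψ : lp (fun _ : G => ℝ) ∞ → lp (fun _ : Σ i, G ⧸ H i => ℝ) ∞ :=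
    fun f => ⟨Φ f, hΦmem f⟩ with hΨ
  have hΨapp : ∀ f x, Ψ f x = Φ f x := fun _ _ => rfl
  have hΨadd : ∀ f g, Ψ (f + g) = Ψ f + Ψ g := by
    intro f g
    apply lp.ext
    funext x
    simp only [hΨapp, lp.coeFn_add, Pi.add_apply, hΦ, comp_add, map_add]
  have hΨsmul : ∀ (c : ℝ) f, Ψ (c • f) = c • Ψ f := by
    intro c f
    apply lp.ext
    funext x
    simp only [hΨapp, lp.coeFn_smul, Pi.smul_apply, hΦ, comp_smul, map_smul, smul_eq_mul]
  let L : lp (fun _ : G => ℝ) ∞ →ₗ[ℝ] ℝ :=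
    { toFun := fun f => n (Ψ f)
      map_add' := fun f g => by
        show n (Ψ (f + g)) = n (Ψ f) + n (Ψ g)
        rw [hΨadd, map_add]
      map_smul' := fun c f => by
        show n (Ψ (c • f)) = c • n (Ψ f)
        rw [hΨsmul, map_smul] }
  have hLbdd : ∀ f, ‖L f‖ ≤ 1 * ‖f‖ := by
    intro f
    calc ‖L f‖ ≤ ‖n‖ * ‖Ψ f‖ := n.le_opNorm _
      _ ≤ 1 * ‖f‖ := by
          rw [hn1]
          apply mul_le_mul_of_nonneg_left _ zero_le_one
          apply lp.norm_le_of_forall_le (norm_nonneg f)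
          intro x
          exact hΦbdd f x
  set M : lp (fun _ : G => ℝ) ∞ →L[ℝ] ℝ := L.mkContinuous 1 hLbdd with hM
  have hMapp : ∀ f, M f = n (Ψ f) := fun _ => rfl
  -- M 1 = 1
  have hΨone : Ψ 1 = 1 := by
    apply lp.ext
    funext x
    have h1 : comp (fun h : H x.1 => (x.2.out * (h : G) : G)) (1 : lp (fun _ : G => ℝ) ∞)
        = 1 := by
      apply lp.ext
      funext b
      rfl
    show Φ (1 : lp (fun _ : G => ℝ) ∞) x = (1 : lp (fun _ : Σ i, G ⧸ H i => ℝ) ∞) x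
    rw [hΦ]
    simp only [h1, hmone]
    rfl
  have hMone : M 1 = 1 := by rw [hMapp, hΨone, hnone]
  -- positivity
  have hMpos : ∀ f : lp (fun _ : G => ℝ) ∞, (∀ x, 0 ≤ f x) → 0 ≤ M f := by
    intro f hf
    rw [hMapp]
    apply hnpos
    intro x
    apply hmpos
    intro h
    exact hf _
  -- invariance
  have hMinv : ∀ (g : G) (f f' : lp (fun _ : G => ℝ) ∞),
      (∀ x, f' x = f (g⁻¹ • x)) → M f' = M f := by
    intro g f f' hff'
    rw [hMapp, hMapp]
    apply hninv g (Ψ f) (Ψ f')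
    rintro ⟨i, q⟩
    -- goal: Ψ f' ⟨i, q⟩ = Ψ f (g⁻¹ • ⟨i, q⟩)
    have hact : (g⁻¹ • (⟨i, q⟩ : Σ j, G ⧸ H j)) = ⟨i, g⁻¹ • q⟩ := rfl
    rw [hΨapp, hΨapp]
    change Φ f' ⟨i, q⟩ = Φ f ⟨i, g⁻¹ • q⟩
    rw [hΦ]
    set a : G := q.out with ha
    set b : G := (g⁻¹ • q).out with hb
    have hmem : (g⁻¹ * a)⁻¹ * b ∈ H i := by
      rw [← QuotientGroup.eq]
      show ((g⁻¹ * a : G) : G ⧸ H i) = (b : G ⧸ H i)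
      rw [hb, QuotientGroup.out_eq']
      rw [← smul_eq_mul, ← MulAction.Quotient.smul_mk, ha, QuotientGroup.out_eq']
    set h₀ : H i := ⟨(g⁻¹ * a)⁻¹ * b, hmem⟩ with hh₀
    have hbeq : b = g⁻¹ * a * (h₀ : G) := by
      rw [hh₀]
      exact (mul_inv_cancel_left _ _).symm
    set φ : lp (fun _ : H i => ℝ) ∞ := comp (fun h : H i => (g⁻¹ * a * (h : G) : G)) f with hφ
    have hL : comp (fun h : H i => (a * (h : G) : G)) f' = φ := by
      apply lp.ext
      funext h
      show f' (a * (h : G)) = f (g⁻¹ * a * (h : G))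
      rw [hff']
      show f (g⁻¹ • (a * (h : G))) = f (g⁻¹ * a * (h : G))
      rw [smul_eq_mul, ← mul_assoc]
    have hR : m i (comp (fun h : H i => (b * (h : G) : G)) f) = m i φ := by
      apply hminv i h₀⁻¹
      intro h
      show f (b * (h : G)) = f (g⁻¹ * a * (((h₀⁻¹)⁻¹ • h : H i) : G))
      have hcoe : (((h₀⁻¹)⁻¹ • h : H i) : G) = (h₀ : G) * (h : G) := by
        rw [inv_inv, smul_eq_mul]
        rfl
      rw [hcoe, hbeq, mul_assoc]
    show m i (comp (fun h : H i => (a * (h : G) : G)) f')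
        = m i (comp (fun h : H i => (b * (h : G) : G)) f)
    rw [hL, hR]
  -- norm
  have hMnorm : ‖M‖ = 1 := by
    apply le_antisymm
    · exact L.mkContinuous_norm_le zero_le_one hLbdd
    · have h1 : ‖(1 : lp (fun _ : G => ℝ) ∞)‖ = 1 := norm_one
      have := M.le_opNorm 1
      rw [h1, mul_one, hMone] at this
      simpa using this
  exact ⟨M, hMnorm, hMpos, hMone, hMinv⟩
end

section
/- Let X be a uniformly discrete metric space of bounded geometry and suppose X is amenable in the sense of Block–Weinberger: for all r, δ > 0 there is a finite nonempty U ⊆ X with |∂ᵣU|/|U| < δ, where ∂ᵣU = {x ∈ X : d(x,U) < r and d(x, X∖U) < r}. Then there exists a sequence of finitely supported probability measures μₙ on X (uniform measures on Følner sets) such that for every bijective isometry g of X with sup_x d(x, g·x) < ∞, ‖g·μₙ - μₙ‖₁ → 0. -/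
open Filter

/-- A uniformly discrete bounded-geometry metric space that is
amenable in the sense of Block–Weinberger admits a sequence of finitely
supported probability measures μₙ such that ‖g·μₙ - μₙ‖₁ → 0 for every
bijective isometry g of X at bounded distance from the identity. -/
theorem stmt9 {X : Type*} [MetricSpace X] [Countable X] [Nonempty X]
    (hud : ∃ ε > (0 : ℝ), ∀ x y : X, x ≠ y → ε ≤ dist x y)
    (hbg : ∀ r : ℝ, ∃ N : ℕ, ∀ x : X,
      (Metric.ball x r).Finite ∧ Nat.card (Metric.ball x r) ≤ N)
    (hamen : ∀ r > (0 : ℝ), ∀ δ > (0 : ℝ), ∃ U : Finset X, U.Nonempty ∧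
      (Nat.card {x : X | (∃ u ∈ U, dist x u < r) ∧ ∃ y ∉ U, dist x y < r} : ℝ)
        < δ * U.card) :
    ∃ μ : ℕ → X → ℝ,
      (∀ n, (Function.support (μ n)).Finite ∧ (∀ x, 0 ≤ μ n x) ∧
        ∑' x, μ n x = 1) ∧
      ∀ g : X ≃ᵢ X, (∃ C : ℝ, ∀ x, dist x (g x) ≤ C) →
        Tendsto (fun n => ∑' x, |μ n (g.symm x) - μ n x|) atTop (nhds 0) := by
  classical
  choose U hUne hUb using fun n : ℕ =>
    hamen (n + 1) (by positivity) (1 / (n + 1)) (by positivity)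
  set μ : ℕ → X → ℝ := fun n x => if x ∈ U n then ((U n).card : ℝ)⁻¹ else 0 with hμ
  have hcardpos : ∀ n, (0 : ℝ) < (U n).card := fun n => by
    exact_mod_cast Finset.card_pos.mpr (hUne n)
  refine ⟨μ, fun n => ⟨?_, fun x => ?_, ?_⟩, ?_⟩
  · refine Set.Finite.subset (U n).finite_toSet (fun x hx => ?_)
    by_contra h
    exact hx (by simp only [hμ]; exact if_neg h)
  · simp only [hμ]; split <;> positivity
  · have h0 : ∀ x ∉ U n, μ n x = 0 := fun x hx => by simp [hμ, hx]
    rw [tsum_eq_sum h0]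
    have : ∀ x ∈ U n, μ n x = ((U n).card : ℝ)⁻¹ := fun x hx => by simp [hμ, hx]
    rw [Finset.sum_congr rfl this, Finset.sum_const, nsmul_eq_mul,
      mul_inv_cancel₀ (ne_of_gt (hcardpos n))]
  · rintro g ⟨C, hC⟩
    -- key norm computation and bound for large n
    have key : ∀ n : ℕ, C ≤ n →
        ∑' x, |μ n (g.symm x) - μ n x| ≤ 1 / (n + 1) := by
      intro n hn
      set V : Finset X := (U n).image g with hV
      have hmemV : ∀ x : X, x ∈ V ↔ g.symm x ∈ U n := by
        intro x
        simp only [hV, Finset.mem_image]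
        constructor
        · rintro ⟨u, hu, rfl⟩; simpa using hu
        · intro h; exact ⟨g.symm x, h, by simp⟩
      set S : Finset X := (V \ U n) ∪ (U n \ V) with hS
      have hinv : (0:ℝ) ≤ ((U n).card : ℝ)⁻¹ := inv_nonneg.mpr (hcardpos n).le
      have hpt : ∀ x, |μ n (g.symm x) - μ n x| =
          if x ∈ S then ((U n).card : ℝ)⁻¹ else 0 := by
        intro x
        have hmS : x ∈ S ↔ (x ∈ V ∧ x ∉ U n) ∨ (x ∈ U n ∧ x ∉ V) := by
          simp [hS, Finset.mem_union, Finset.mem_sdiff]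
        by_cases h1 : x ∈ V <;> by_cases h2 : x ∈ U n
        · rw [if_neg (by rw [hmS]; tauto)]
          simp only [hμ]
          rw [if_pos ((hmemV x).mp h1), if_pos h2, sub_self, abs_zero]
        · rw [if_pos (by rw [hmS]; tauto)]
          simp only [hμ]
          rw [if_pos ((hmemV x).mp h1), if_neg h2, sub_zero, abs_of_nonneg hinv]
        · rw [if_pos (by rw [hmS]; tauto)]
          simp only [hμ]
          rw [if_neg (fun h => h1 ((hmemV x).mpr h)), if_pos h2, zero_sub,
            abs_neg, abs_of_nonneg hinv]
        · rw [if_neg (by rw [hmS]; tauto)]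
          simp only [hμ]
          rw [if_neg (fun h => h1 ((hmemV x).mpr h)), if_neg h2, sub_self, abs_zero]
      have hsum : ∑' x, |μ n (g.symm x) - μ n x| =
          (S.card : ℝ) * ((U n).card : ℝ)⁻¹ := by
        rw [tsum_congr hpt, tsum_eq_sum (s := S) (fun x hx => if_neg hx)]
        rw [Finset.sum_congr rfl (fun x hx => if_pos hx), Finset.sum_const,
          nsmul_eq_mul]
      rw [hsum]
      refine le_of_lt ?_
      -- S is contained in the boundary set B
      set B : Set X := {x : X | (∃ u ∈ U n, dist x u < (n:ℝ) + 1) ∧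
          ∃ y ∉ U n, dist x y < (n:ℝ) + 1} with hB
      have hsubB : (S : Set X) ⊆ B := by
        intro x hx
        rw [Finset.mem_coe, hS, Finset.mem_union, Finset.mem_sdiff,
          Finset.mem_sdiff] at hx
        have hdx : dist x (g.symm x) < (n:ℝ) + 1 := by
          have : dist (g.symm x) (g (g.symm x)) ≤ C := hC _
          rw [g.apply_symm_apply] at this
          rw [dist_comm]
          calc dist (g.symm x) x ≤ C := this
            _ ≤ n := hn
            _ < n + 1 := by linarith
        rcases hx with ⟨hV1, hU1⟩ | ⟨hU1, hV1⟩
        · exact ⟨⟨g.symm x, (hmemV x).mp hV1, hdx⟩,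
            ⟨x, hU1, by simp [dist_self]; positivity⟩⟩
        · exact ⟨⟨x, hU1, by simp [dist_self]; positivity⟩,
            ⟨g.symm x, fun h => hV1 ((hmemV x).mpr h), hdx⟩⟩
      have hBfin : B.Finite := by
        obtain ⟨N, hN⟩ := hbg ((n:ℝ) + 1)
        have : B ⊆ ⋃ u ∈ (U n : Set X), Metric.ball u ((n:ℝ) + 1) := by
          rintro x ⟨⟨u, hu, hdu⟩, -⟩
          exact Set.mem_biUnion hu (by simpa [Metric.mem_ball] using hdu)
        exact Set.Finite.subset ((U n).finite_toSet.biUnion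
          (fun u _ => (hN u).1)) this
      have hScard : (S.card : ℝ) ≤ (Nat.card B : ℝ) := by
        rw [Nat.card_coe_set_eq]
        exact_mod_cast (by
          calc S.card = (S : Set X).ncard := (Set.ncard_coe_finset S).symm
            _ ≤ B.ncard := Set.ncard_le_ncard hsubB hBfin)
      have := hUb n
      rw [← hB] at this
      calc (S.card : ℝ) * ((U n).card : ℝ)⁻¹
          ≤ (Nat.card B : ℝ) * ((U n).card : ℝ)⁻¹ :=
            mul_le_mul_of_nonneg_right hScard hinv
        _ < (1 / (n + 1) * (U n).card) * ((U n).card : ℝ)⁻¹ := by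
            apply mul_lt_mul_of_pos_right _ (inv_pos.mpr (hcardpos n))
            exact_mod_cast this
        _ = 1 / (n + 1) := by
            field_simp
    -- conclude by squeezing
    have hnn : ∀ n, 0 ≤ ∑' x, |μ n (g.symm x) - μ n x| := fun n =>
      tsum_nonneg (fun x => abs_nonneg _)
    refine squeeze_zero' (Eventually.of_forall hnn) ?_
      tendsto_one_div_add_atTop_nhds_zero_nat
    filter_upwards [eventually_ge_atTop ⌈C⌉₊] with n hn
    exact key n (le_trans (Nat.le_ceil C) (by exact_mod_cast hn))
end

section
/- Let G be a finitely generated group acting by isometries on a metric space X with basepoint x₀. Suppose there is C > 0 with d(x₀, g·x₀) ≤ C·ℓ(g) for all g ∈ G, where ℓ is the word length. Given functions ξₙ : X → Prob(X) such that for every R > 0, ‖ξₙ(x) - ξₙ(y)‖₁ → 0 uniformly over {(x,y) : d(x,y) < R}, define μₙ : G → Prob(X) by μₙ(g) = g·ξₙ(g⁻¹·x₀). Then for every g ∈ G, lim_{n→∞} sup_{w∈G} ‖g·μₙ(w) - μₙ(g·w)‖₁ = 0. -/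
/-- If G acts by isometries on X with d(x₀, g·x₀) ≤ C·ℓ(g) for
the word length ℓ, and ξₙ : X → Prob(X) have the uniform displacement-decay
property, then μₙ(g) = g·ξₙ(g⁻¹·x₀) satisfies
sup_w ‖g·μₙ(w) - μₙ(gw)‖₁ → 0 for every g ∈ G. -/
theorem stmt11 {G X : Type*} [Group G] [MetricSpace X] [Countable X]
    [MulAction G X]
    (S : Finset G) (hgen : Subgroup.closure (S : Set G) = ⊤)
    (ℓ : G → ℕ)
    (hℓ : ∀ g : G, ℓ g = sInf {n : ℕ | ∃ w : List G, w.length = n ∧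
      (∀ s ∈ w, s ∈ S ∨ s⁻¹ ∈ S) ∧ w.prod = g})
    (hiso : ∀ (g : G) (x y : X), dist (g • x) (g • y) = dist x y)
    (x₀ : X) (C : ℝ) (hC : 0 < C)
    (hCd : ∀ g : G, dist x₀ (g • x₀) ≤ C * ℓ g)
    (ξ : ℕ → X → X → ℝ)
    (hpos : ∀ n x z, 0 ≤ ξ n x z) (hsum : ∀ n x, Summable (ξ n x))
    (hone : ∀ n x, ∑' z, ξ n x z = 1)
    (hconv : ∀ R > (0 : ℝ), ∀ ε > (0 : ℝ), ∃ N : ℕ, ∀ n ≥ N, ∀ x y : X,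
      dist x y < R → ∑' z, |ξ n x z - ξ n y z| < ε)
    (μ : ℕ → G → X → ℝ)
    (hμ : ∀ n g z, μ n g z = ξ n (g⁻¹ • x₀) (g⁻¹ • z)) :
    ∀ g : G, ∀ ε > (0 : ℝ), ∃ N : ℕ, ∀ n ≥ N, ∀ w : G,
      (∑' z, |μ n w (g⁻¹ • z) - μ n (g * w) z|) < ε := by
  intro g ε hε
  have hR : (0 : ℝ) < C * ℓ g⁻¹ + 1 := by positivity
  obtain ⟨N, hN⟩ := hconv (C * ℓ g⁻¹ + 1) hR ε hε
  refine ⟨N, fun n hn w => ?_⟩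
  have hdist : dist (w⁻¹ • x₀) ((w⁻¹ * g⁻¹) • x₀) < C * ℓ g⁻¹ + 1 := by
    have : dist (w⁻¹ • x₀) ((w⁻¹ * g⁻¹) • x₀) = dist x₀ (g⁻¹ • x₀) := by
      rw [mul_smul, hiso]
    rw [this]
    have := hCd g⁻¹
    linarith
  have key : (∑' z, |μ n w (g⁻¹ • z) - μ n (g * w) z|)
      = ∑' u, |ξ n (w⁻¹ • x₀) u - ξ n ((w⁻¹ * g⁻¹) • x₀) u| := by
    have := (MulAction.toPerm (w⁻¹ * g⁻¹ : G) : Equiv.Perm X).tsum_eq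
      (f := fun u => |ξ n (w⁻¹ • x₀) u - ξ n ((w⁻¹ * g⁻¹) • x₀) u|)
    rw [← this]
    congr 1
    ext z
    simp only [MulAction.toPerm_apply, hμ, mul_inv_rev, mul_smul]
  rw [key]
  exact hN n hn _ _ hdist
end

section
/- Let G be a group, A a Banach space with an isometric linear G-action, and suppose f_λ is a bounded net in A such that f_λ - g·f_λ → 0 weakly in A for every g ∈ G, with G countable. Then there exists a sequence fₙ of convex combinations of the f_λ such that ‖fₙ - g·fₙ‖ → 0 in norm for every g ∈ G. -/
open NormedSpace Filter

/-- If (f_λ) is a bounded net in the Banach G-module A with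
f_λ - g·f_λ → 0 weakly for every g in the countable group G, then there is a
sequence of convex combinations fₙ of the f_λ with ‖fₙ - g·fₙ‖ → 0 in norm
for every g. -/
theorem stmt14 {G A : Type*} [Group G] [Countable G] [NormedAddCommGroup A]
    [NormedSpace ℝ A] [CompleteSpace A] [MulAction G A]
    (hadd : ∀ (g : G) (a b : A), g • (a + b) = g • a + g • b)
    (hsmul : ∀ (g : G) (c : ℝ) (a : A), g • (c • a) = c • (g • a))
    (hnorm : ∀ (g : G) (a : A), ‖g • a‖ = ‖a‖)
    (ι : Type*) (l : Filter ι) [l.NeBot] (f : ι → A)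
    (hbdd : ∃ C : ℝ, ∀ i, ‖f i‖ ≤ C)
    (hweak : ∀ (g : G) (φ : StrongDual ℝ A),
      Tendsto (fun i => φ (f i - g • f i)) l (nhds 0)) :
    ∃ fs : ℕ → A,
      (∀ n, fs n ∈ convexHull ℝ (Set.range f)) ∧
      ∀ g : G, Tendsto (fun n => ‖fs n - g • fs n‖) atTop (nhds 0) := by
  classical
  obtain ⟨e, he⟩ := exists_surjective_nat G
  -- the continuous linear maps a ↦ a - g • a
  have hLlin : ∀ g : G, IsLinearMap ℝ (fun a : A => a - g • a) := fun g =>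
    ⟨fun a b => by rw [hadd]; abel, fun c a => by rw [hsmul, smul_sub]⟩
  let L : G → A →L[ℝ] A := fun g =>
    LinearMap.mkContinuous ((hLlin g).mk' _) 2 (fun a => by
      simp only [IsLinearMap.mk'_apply]
      calc ‖a - g • a‖ ≤ ‖a‖ + ‖g • a‖ := norm_sub_le _ _
        _ = 2 * ‖a‖ := by rw [hnorm]; ring)
  have hL : ∀ (g : G) (a : A), L g a = a - g • a := fun g a => rfl
  let inc : ∀ (S : Finset G), S → (A →L[ℝ] (S → A)) := fun S g =>
    LinearMap.mkContinuous (LinearMap.single ℝ (fun _ : S => A) g) 1 (fun a => by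
      rw [one_mul]
      refine (pi_norm_le_iff_of_nonneg (norm_nonneg a)).mpr fun j => ?_
      rcases eq_or_ne j g with h | h
      · subst h; simp
      · simp [Pi.single_apply, h])
  have key : ∀ (S : Finset G) (ε : ℝ), 0 < ε →
      ∃ x ∈ convexHull ℝ (Set.range f), ∀ g ∈ S, ‖x - g • x‖ < ε := by
    intro S ε hε
    let T : A →L[ℝ] (S → A) := ContinuousLinearMap.pi (fun g : S => L g)
    set C : Set (S → A) := T '' (convexHull ℝ (Set.range f)) with hC
    have hconvC : Convex ℝ (closure C) :=
      ((convex_convexHull ℝ _).linear_image (T : A →ₗ[ℝ] (S → A))).closure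
    have h0 : (0 : S → A) ∈ closure C := by
      by_contra h0
      obtain ⟨φ, u, hu1, hu2⟩ :=
        geometric_hahn_banach_closed_point hconvC isClosed_closure h0
      have hu0 : u < 0 := by simpa using hu2
      have htend : Tendsto (fun i => φ (T (f i))) l (nhds 0) := by
        have heq : ∀ i, φ (T (f i)) =
            ∑ g : S, (φ.comp (inc S g))
              (f i - (g : G) • f i) := by
          intro i
          have h1 : T (f i) = ∑ g : S, Pi.single g (f i - (g : G) • f i) := by
            rw [Finset.univ_sum_single (f := fun g : S => f i - (g : G) • f i)]
            rfl
          rw [h1, map_sum]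
          rfl
        rw [funext heq]
        have : (0 : ℝ) = ∑ _g : S, (0 : ℝ) := by simp
        rw [this]
        exact tendsto_finset_sum _ (fun g _ => hweak (g : G) _)
      have hev : ∀ᶠ i in l, u < φ (T (f i)) := htend.eventually (eventually_gt_nhds hu0)
      obtain ⟨i, hi⟩ := hev.exists
      have hlt : φ (T (f i)) < u :=
        hu1 _ (subset_closure ⟨f i, subset_convexHull ℝ _ ⟨i, rfl⟩, rfl⟩)
      linarith
    obtain ⟨y, hyC, hy⟩ := Metric.mem_closure_iff.mp h0 ε hε
    obtain ⟨x, hx, rfl⟩ := hyC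
    refine ⟨x, hx, fun g hg => ?_⟩
    calc ‖x - g • x‖ = ‖(T x) ⟨g, hg⟩‖ := rfl
      _ ≤ ‖T x‖ := norm_le_pi_norm _ _
      _ < ε := by simpa [dist_eq_norm] using hy
  choose x hx1 hx2 using fun n : ℕ =>
    key ((Finset.range (n + 1)).image e) (1 / (n + 1)) (by positivity)
  refine ⟨x, hx1, fun g => ?_⟩
  obtain ⟨k, rfl⟩ := he g
  have hbound : ∀ n ≥ k, ‖x n - e k • x n‖ ≤ 1 / (n + 1) := fun n hn =>
    (hx2 n _ (Finset.mem_image_of_mem e (Finset.mem_range.mpr (by omega)))).le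
  refine squeeze_zero' (Eventually.of_forall fun n => norm_nonneg _)
    (eventually_atTop.mpr ⟨k, hbound⟩) ?_
  exact tendsto_one_div_add_atTop_nhds_zero_nat
end

section
/- Let G be a countable group acting on a countable set K. Suppose there exists μ ∈ (ℓ¹(K))** with μ(ε) = 1 (where ε ∈ ℓ∞(K) = (ℓ¹(K))* is the constant function 1) and μ invariant under the induced G-action. Then there exists a sequence fⁿ of finitely supported probability measures in ℓ¹(K) with ‖fⁿ - g·fⁿ‖₁ → 0 for every g ∈ G. -/
open NormedSpace Filter

theorem key15 {X : Type*} [NormedAddCommGroup X] [NormedSpace ℝ X]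
    (ε : StrongDual ℝ X) {ι : Type*} [Fintype ι] (T : ι → (X →L[ℝ] X))
    (μ : StrongDual ℝ (StrongDual ℝ X)) (hμε : μ ε = 1)
    (hμinv : ∀ (i : ι) (φ : StrongDual ℝ X), μ (φ.comp (T i)) = μ φ)
    {δ : ℝ} (hδ : 0 < δ) :
    ∃ f : X, |1 - ε f| < δ ∧ ∀ i, ‖f - T i f‖ < δ := by
  classical
  set E := ℝ × (ι → X) with hE
  set Ψ : X →L[ℝ] E :=
    ε.prod (ContinuousLinearMap.pi fun i => ContinuousLinearMap.id ℝ X - T i) with hΨ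
  set S : Submodule ℝ E := LinearMap.range (Ψ : X →ₗ[ℝ] E) with hS
  set x : E := ((1 : ℝ), (0 : ι → X)) with hx
  have hmem : x ∈ S.topologicalClosure := by
    by_contra hxn
    obtain ⟨ψ, u, hu, hux⟩ := geometric_hahn_banach_closed_point
      (S.topologicalClosure.convex) S.isClosed_topologicalClosure hxn
    have hvan : ∀ a ∈ S.topologicalClosure, ψ a = 0 := by
      intro a ha
      by_contra hne
      have h1 : ψ (((u + 1) / ψ a) • a) < u :=
        hu _ (S.topologicalClosure.smul_mem _ ha)
      rw [map_smul, smul_eq_mul, div_mul_cancel₀ _ hne] at h1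
      linarith
    have hu0 : 0 < u := by
      have := hu 0 (S.topologicalClosure.zero_mem)
      simpa using this
    set c : ℝ := ψ x with hc
    have hc0 : 0 < c := lt_trans hu0 hux
    set φ : ι → StrongDual ℝ X := fun i =>
      ψ.comp ((ContinuousLinearMap.inr ℝ ℝ (ι → X)).comp
        (ContinuousLinearMap.pi (fun j => if j = i then ContinuousLinearMap.id ℝ X else 0)))
      with hφ
    have hdecomp : ∀ (t : ℝ) (v : ι → X),
        ψ (t, v) = t * c + ∑ i, (φ i) (v i) := by
      intro t v
      have h1 : ((t, v) : E) = t • x + ((0:ℝ), v) := by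
        rw [hx, Prod.smul_mk, Prod.mk_add_mk]
        simp
      have h2 : ((0:ℝ), v) = ContinuousLinearMap.inr ℝ ℝ (ι → X) v := rfl
      rw [h1, map_add, map_smul, smul_eq_mul, h2, ← hc]
      congr 1
      set ψ' : (ι → X) →L[ℝ] ℝ := ψ.comp (ContinuousLinearMap.inr ℝ ℝ (ι → X)) with hψ'
      have h3 : v = ∑ i, Pi.single i (v i) := (Finset.univ_sum_single v).symm
      have h4 : ψ' v = ∑ i, ψ' (Pi.single i (v i)) := by
        conv_lhs => rw [h3]
        exact map_sum ψ' _ _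
      rw [← ContinuousLinearMap.comp_apply, ← hψ', h4]
      refine Finset.sum_congr rfl fun i _ => ?_
      have h5 : (ContinuousLinearMap.pi
          (fun j => if j = i then ContinuousLinearMap.id ℝ X else (0 : X →L[ℝ] X))) (v i)
          = Pi.single i (v i) := by
        funext j
        simp [ContinuousLinearMap.pi_apply, apply_ite (fun (ρ : X →L[ℝ] X) => ρ (v i)),
          Pi.single_apply]
      simp only [hφ, hψ', ContinuousLinearMap.comp_apply]
      rw [h5]
    set χ : StrongDual ℝ X := c • ε + ∑ i, (φ i - (φ i).comp (T i)) with hχ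
    have hχ0 : χ = 0 := by
      ext f
      have hΨf : Ψ f ∈ S.topologicalClosure :=
        S.le_topologicalClosure ⟨f, rfl⟩
      have h0 : ψ (Ψ f) = 0 := hvan _ hΨf
      have hΨf' : (Ψ f : E) = (ε f, fun i => f - T i f) := rfl
      rw [hΨf', hdecomp] at h0
      simp only [hχ, ContinuousLinearMap.add_apply, ContinuousLinearMap.smul_apply,
        ContinuousLinearMap.sum_apply, ContinuousLinearMap.sub_apply,
        ContinuousLinearMap.comp_apply, ContinuousLinearMap.zero_apply, smul_eq_mul]
      rw [← h0, mul_comm]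
      congr 1
      exact Finset.sum_congr rfl fun i _ => (map_sub (φ i) _ _).symm
    have hμχ : μ χ = c := by
      rw [hχ, map_add, map_smul, smul_eq_mul, hμε, map_sum]
      have h4 : ∀ i ∈ Finset.univ, μ (φ i - (φ i).comp (T i)) = 0 := by
        intro i _
        rw [map_sub, hμinv]
        ring
      rw [Finset.sum_congr rfl h4]
      simp
    rw [hχ0, map_zero] at hμχ
    linarith
  have hx_cl : x ∈ closure (S : Set E) := by
    rw [← Submodule.topologicalClosure_coe]
    exact hmem
  rw [Metric.mem_closure_iff] at hx_cl
  obtain ⟨y, hyS, hxy⟩ := hx_cl δ hδ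
  obtain ⟨f, rfl⟩ := hyS
  refine ⟨f, ?_, ?_⟩
  · have h1 : dist (x.1) ((Ψ f : E).1) ≤ dist x (Ψ f : E) := by
      rw [Prod.dist_eq]; exact le_max_left _ _
    have h2 : dist (1:ℝ) (ε f) < δ := lt_of_le_of_lt h1 hxy
    rwa [Real.dist_eq] at h2
  · intro i
    have h1 : dist (x.2) ((Ψ f : E).2) ≤ dist x (Ψ f : E) := by
      rw [Prod.dist_eq]; exact le_max_right _ _
    have h2 : dist (x.2 i) ((Ψ f : E).2 i) ≤ dist x.2 (Ψ f : E).2 :=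
      dist_le_pi_dist _ _ i
    have h3 : dist ((0:X)) (f - T i f) < δ := by
      have h4 : dist (x.2 i) ((Ψ f : E).2 i) < δ := lt_of_le_of_lt (h2.trans h1) hxy
      exact h4
    rwa [dist_comm, dist_zero_right] at h3

lemma lp1_summable' {K : Type*} (x : lp (fun _ : K => ℝ) 1) :
    Summable (fun k => |x k|) := by
  have h := lp.memℓp x
  rw [memℓp_gen_iff (by norm_num : (0:ℝ) < (1 : ENNReal).toReal)] at h
  simpa using h

lemma lp1_norm_eq' {K : Type*} (x : lp (fun _ : K => ℝ) 1) :
    ‖x‖ = ∑' k, |x k| := by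
  rw [lp.norm_eq_tsum_rpow (by norm_num : (0:ℝ) < (1 : ENNReal).toReal)]
  simp [Real.norm_eq_abs]

lemma lp1_T_norm {G K : Type*} [Group G] [MulAction G K]
    (T : G → (lp (fun _ : K => ℝ) 1 →L[ℝ] lp (fun _ : K => ℝ) 1))
    (hT : ∀ (g : G) (f : lp (fun _ : K => ℝ) 1) (k : K), T g f k = f (g⁻¹ • k))
    (g : G) (z : lp (fun _ : K => ℝ) 1) : ‖T g z‖ = ‖z‖ := by
  rw [lp1_norm_eq', lp1_norm_eq']
  calc ∑' k, |(T g z) k| = ∑' k, |z ((MulAction.toPerm (g⁻¹ : G)) k)| :=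
        tsum_congr fun k => by rw [hT]; rfl
    _ = ∑' k, |z k| := Equiv.tsum_eq (MulAction.toPerm (g⁻¹ : G)) (fun k => |z k|)

lemma lp1_sub_T_tsum {G K : Type*} [Group G] [MulAction G K]
    (T : G → (lp (fun _ : K => ℝ) 1 →L[ℝ] lp (fun _ : K => ℝ) 1))
    (hT : ∀ (g : G) (f : lp (fun _ : K => ℝ) 1) (k : K), T g f k = f (g⁻¹ • k))
    (g : G) (z : lp (fun _ : K => ℝ) 1) :
    ∑' k, |z k - z (g⁻¹ • k)| = ‖z - T g z‖ := by
  rw [lp1_norm_eq']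
  refine tsum_congr fun k => ?_
  have h0 : (z - T g z) k = z k - (T g z) k := rfl
  rw [h0, hT]

lemma lp1_summable {K : Type*} (x : lp (fun _ : K => ℝ) 1) :
    Summable (fun k => |x k|) := by
  have h := lp.memℓp x
  rw [memℓp_gen_iff (by norm_num : (0:ℝ) < (1 : ENNReal).toReal)] at h
  simpa using h

lemma lp1_norm_eq {K : Type*} (x : lp (fun _ : K => ℝ) 1) :
    ‖x‖ = ∑' k, |x k| := by
  rw [lp.norm_eq_tsum_rpow (by norm_num : (0:ℝ) < (1 : ENNReal).toReal)]
  simp [Real.norm_eq_abs]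

lemma lp1_abs_tsum_le {K : Type*} (x : lp (fun _ : K => ℝ) 1) :
    |∑' k, x k| ≤ ‖x‖ := by
  rw [lp1_norm_eq]
  have hs : Summable (fun k => ‖x k‖) := by
    simpa [Real.norm_eq_abs] using lp1_summable x
  calc |∑' k, x k| = ‖∑' k, x k‖ := (Real.norm_eq_abs _).symm
    _ ≤ ∑' k, ‖x k‖ := norm_tsum_le_tsum_norm hs
    _ = ∑' k, |x k| := by simp [Real.norm_eq_abs]

lemma lp1_truncate {K : Type*} (x : lp (fun _ : K => ℝ) 1) {δ : ℝ} (hδ : 0 < δ) :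
    ∃ (s : Finset K) (y : lp (fun _ : K => ℝ) 1),
      (∀ k ∉ s, y k = 0) ∧ (∀ k ∈ s, y k = x k) ∧ ‖x - y‖ < δ := by
  classical
  have htail := tendsto_tsum_compl_atTop_zero (fun k => |x k|)
  obtain ⟨s, hs⟩ := ((tendsto_order.1 htail).2 δ hδ).exists
  set yf : K → ℝ := fun k => if k ∈ s then x k else 0 with hyf
  have hymem : Memℓp yf 1 := by
    apply memℓp_gen
    apply summable_of_ne_finset_zero (s := s)
    intro k hk
    simp [hyf, hk]
  set y : lp (fun _ : K => ℝ) 1 := ⟨yf, hymem⟩ with hy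
  have hcoe : ∀ k, (x - y) k = if k ∈ s then 0 else x k := by
    intro k
    have h0 : (x - y) k = x k - yf k := rfl
    rw [h0, hyf]
    by_cases hk : k ∈ s <;> simp [hk]
  refine ⟨s, y, fun k hk => by simp [hy, hyf, hk], fun k hk => by simp [hy, hyf, hk], ?_⟩
  have hnorm : ‖x - y‖ = ∑' (k : { k // k ∉ s }), |x k| := by
    rw [lp1_norm_eq]
    calc ∑' k, |(x - y) k|
        = ∑' k, Set.indicator {k | k ∉ s} (fun k => |x k|) k := by
          refine tsum_congr fun k => ?_
          rw [hcoe k]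
          by_cases hk : k ∈ s <;> simp [Set.indicator, hk]
      _ = ∑' (k : { k // k ∉ s }), |x k| := (tsum_subtype {k | k ∉ s} (fun k => |x k|)).symm
  rw [hnorm]
  exact hs

/-- If there is a G-invariant μ ∈ (ℓ¹(K))** with μ(ε) = 1, where
ε is the augmentation (constant-one) functional, then there is a sequence fⁿ
of finitely supported probability measures with ‖fⁿ - g·fⁿ‖₁ → 0 for all g. -/
theorem stmt15 {G K : Type*} [Group G] [Countable G] [Countable K]
    [MulAction G K]
    (ε : StrongDual ℝ (lp (fun _ : K => ℝ) 1))
    (hε : ∀ f : lp (fun _ : K => ℝ) 1, ε f = ∑' k, f k)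
    (T : G → (lp (fun _ : K => ℝ) 1 →L[ℝ] lp (fun _ : K => ℝ) 1))
    (hT : ∀ (g : G) (f : lp (fun _ : K => ℝ) 1) (k : K), T g f k = f (g⁻¹ • k))
    (μ : StrongDual ℝ (StrongDual ℝ (lp (fun _ : K => ℝ) 1)))
    (hμε : μ ε = 1)
    (hμinv : ∀ (g : G) (φ : StrongDual ℝ (lp (fun _ : K => ℝ) 1)),
      μ (φ.comp (T g)) = μ φ) :
    ∃ f : ℕ → K → ℝ,
      (∀ n, (Function.support (f n)).Finite ∧ (∀ k, 0 ≤ f n k) ∧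
        ∑' k, f n k = 1) ∧
      ∀ g : G,
        Tendsto (fun n => ∑' k, |f n k - f n (g⁻¹ • k)|) atTop (nhds 0) := by
  classical
  set X := lp (fun _ : K => ℝ) 1 with hX
  obtain ⟨e, he⟩ := exists_surjective_nat G
  set δ : ℕ → ℝ := fun n => 1 / (8 * ((n : ℝ) + 1)) with hδdef
  have hδpos : ∀ n, 0 < δ n := by
    intro n; apply div_pos one_pos; positivity
  have hδ8 : ∀ n, δ n ≤ 1 / 8 := by
    intro n
    rw [hδdef]
    apply div_le_div_of_nonneg_left one_pos.le (by norm_num)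
    have : (0:ℝ) ≤ (n:ℝ) := Nat.cast_nonneg n
    nlinarith
  -- abs eval bound
  have habs : ∀ x : X, |ε x| ≤ ‖x‖ := by
    intro x
    rw [hε, lp1_norm_eq']
    have hs : Summable (fun k => ‖x k‖) := by
      simpa [Real.norm_eq_abs] using lp1_summable' x
    calc |∑' k, x k| = ‖∑' k, x k‖ := (Real.norm_eq_abs _).symm
      _ ≤ ∑' k, ‖x k‖ := norm_tsum_le_tsum_norm hs
      _ = ∑' k, |x k| := by simp [Real.norm_eq_abs]
  have main : ∀ n : ℕ, ∃ (s : Finset K) (y : X),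
      (∀ k ∉ s, y k = 0) ∧ |1 - ε y| ≤ 2 * δ n ∧
      ∀ i : ℕ, i < n → ‖y - T (e i) y‖ ≤ 3 * δ n := by
    intro n
    obtain ⟨f, hf1, hf2⟩ := key15 ε (fun i : Fin n => T (e i)) μ hμε
      (fun i φ => hμinv (e i) φ) (hδpos n)
    obtain ⟨s, y, hy0, _, hfy⟩ := lp1_truncate f (hδpos n)
    refine ⟨s, y, hy0, ?_, ?_⟩
    · have h1 : |ε f - ε y| ≤ ‖f - y‖ := by
        rw [← map_sub]; exact habs _
      calc |1 - ε y| ≤ |1 - ε f| + |ε f - ε y| := by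
            have : (1 : ℝ) - ε y = (1 - ε f) + (ε f - ε y) := by ring
            rw [this]; exact abs_add_le _ _
        _ ≤ δ n + δ n := add_le_add hf1.le (h1.trans hfy.le)
        _ = 2 * δ n := by ring
    · intro i hi
      have h2 := hf2 ⟨i, hi⟩
      have h3 : ‖T (e i) f - T (e i) y‖ = ‖f - y‖ := by
        rw [← map_sub, lp1_T_norm T hT]
      calc ‖y - T (e i) y‖
          = ‖(y - f) + (f - T (e i) f) + (T (e i) f - T (e i) y)‖ := by
            congr 1; abel
        _ ≤ ‖(y - f) + (f - T (e i) f)‖ + ‖T (e i) f - T (e i) y‖ := norm_add_le _ _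
        _ ≤ ‖y - f‖ + ‖f - T (e i) f‖ + ‖T (e i) f - T (e i) y‖ := by
            exact add_le_add_left (norm_add_le _ _) _
        _ ≤ δ n + δ n + δ n := by
            rw [norm_sub_rev, h3]
            exact add_le_add (add_le_add hfy.le (h2 : ‖f - T (e (⟨i, hi⟩ : Fin n)) f‖ < δ n).le) hfy.le
        _ = 3 * δ n := by ring
  choose s y hy0 hεy hTy using main
  set N : ℕ → ℝ := fun n => ‖y n‖ with hN
  have hNge : ∀ n, 3 / 4 ≤ N n := by
    intro n
    have h1 : |ε (y n)| ≤ N n := habs _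
    have h2 : 1 - 2 * δ n ≤ |ε (y n)| := by
      have := abs_sub_abs_le_abs_sub (1 : ℝ) (ε (y n))
      have h3 : |(1:ℝ)| = 1 := abs_one
      have := hεy n
      cases' abs_sub_le_iff.1 (hεy n) with h4 h5
      have h6 : |ε (y n)| ≥ ε (y n) := le_abs_self _
      linarith
    have h7 : 2 * δ n ≤ 1 / 4 := by have := hδ8 n; linarith
    linarith
  have hNpos : ∀ n, 0 < N n := fun n => lt_of_lt_of_le (by norm_num) (hNge n)
  refine ⟨fun n k => |y n k| / N n, ?_, ?_⟩
  · intro n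
    refine ⟨?_, fun k => div_nonneg (abs_nonneg _) (norm_nonneg _), ?_⟩
    · apply Set.Finite.subset (s n).finite_toSet
      intro k hk
      simp only [Function.mem_support] at hk
      by_contra hks
      exact hk (by rw [hy0 n k hks]; simp)
    · rw [tsum_div_const, ← lp1_norm_eq']
      exact div_self (hNpos n).ne'
  · intro g
    obtain ⟨i, rfl⟩ := he g
    have hbound : ∀ n, i < n →
        ∑' k, |(|y n k| / N n - |y n ((e i)⁻¹ • k)| / N n)| ≤ 4 * δ n := by
      intro n hin
      set u : Finset K := s n ∪ (s n).image (fun k => e i • k) with hu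
      have hout : ∀ k ∉ u, y n k = 0 ∧ y n ((e i)⁻¹ • k) = 0 := by
        intro k hk
        rw [hu, Finset.mem_union] at hk
        push_neg at hk
        refine ⟨hy0 n k hk.1, ?_⟩
        by_contra h0
        have h1 : (e i)⁻¹ • k ∈ s n := by
          by_contra h2
          exact h0 (hy0 n _ h2)
        exact hk.2 (Finset.mem_image.2 ⟨_, h1, by simp⟩)
      have hS1 : Summable (fun k => |(|y n k| / N n - |y n ((e i)⁻¹ • k)| / N n)|) := by
        apply summable_of_ne_finset_zero (s := u)
        intro k hk
        rw [(hout k hk).1, (hout k hk).2]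
        simp
      have hS2 : Summable (fun k => |y n k - y n ((e i)⁻¹ • k)| / N n) := by
        apply summable_of_ne_finset_zero (s := u)
        intro k hk
        rw [(hout k hk).1, (hout k hk).2]
        simp
      have hpt : ∀ k, |(|y n k| / N n - |y n ((e i)⁻¹ • k)| / N n)|
          ≤ |y n k - y n ((e i)⁻¹ • k)| / N n := by
        intro k
        rw [div_sub_div_same, abs_div, abs_of_pos (hNpos n)]
        exact div_le_div_of_nonneg_right (abs_abs_sub_abs_le_abs_sub _ _) (hNpos n).le
      calc ∑' k, |(|y n k| / N n - |y n ((e i)⁻¹ • k)| / N n)|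
          ≤ ∑' k, |y n k - y n ((e i)⁻¹ • k)| / N n := Summable.tsum_le_tsum hpt hS1 hS2
        _ = ‖y n - T (e i) (y n)‖ / N n := by
            rw [tsum_div_const, lp1_sub_T_tsum T hT]
        _ ≤ (3 * δ n) / (3 / 4) := by
            apply div_le_div₀ (by positivity) (hTy n i hin) (by norm_num) (hNge n)
        _ = 4 * δ n := by ring
    apply squeeze_zero' (Filter.Eventually.of_forall fun n => tsum_nonneg fun k => abs_nonneg _)
      (Filter.eventually_atTop.2 ⟨i + 1, fun n hn => hbound n (Nat.lt_of_lt_of_le (Nat.lt_succ_self i) hn)⟩)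
    have h8 : (fun n : ℕ => 4 * δ n) = fun n : ℕ => (1 / 2) * (1 / ((n : ℝ) + 1)) := by
      funext n
      rw [hδdef]
      field_simp
      ring
    rw [h8]
    have h9 := tendsto_one_div_add_atTop_nhds_zero_nat.const_mul (1 / 2 : ℝ)
    rw [mul_zero] at h9
    exact h9
end
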